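/- arXiv:math/9912185 — 2 statements merged into one kernel-verified Lean document; each statement's English description precedes it below -/
import Mathlib

section
/- The two-sided ideal of U_i(sl_2) generated by E², F², and K^{2N} - 1 is a Hopf ideal: it is contained in the kernel of the counit, stable under the antipode, and its coproduct lies in I ⊗ H + H ⊗ I. -/
noncomputable section
open scoped TensorProduct

namespace Stmt2

def X (n : Fin 4) : FreeAlgebra ℂ (Fin 4) := FreeAlgebra.ι ℂ n

inductive rel : FreeAlgebra ℂ (Fin 4) → FreeAlgebra ℂ (Fin 4) → Prop
  | kki : rel (X 0 * X 1) 1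
  | kik : rel (X 1 * X 0) 1
  | ke : rel (X 0 * X 2) (-(X 2 * X 0))
  | kf : rel (X 0 * X 3) (-(X 3 * X 0))
  | ef : rel (X 2 * X 3 - X 3 * X 2) ((2 * Complex.I)⁻¹ • (X 0 - X 1))

abbrev U := RingQuot rel

def K : U := RingQuot.mkAlgHom ℂ rel (X 0)
def Ki : U := RingQuot.mkAlgHom ℂ rel (X 1)
def E : U := RingQuot.mkAlgHom ℂ rel (X 2)
def F : U := RingQuot.mkAlgHom ℂ rel (X 3)

/-- The two-sided ideal of `U_i(sl₂)` generated by `E²`, `F²`, `K^(2N) - 1`,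
as a `ℂ`-submodule (spanned by all products `a * g * b` with `g` a generator). -/
def I (N : ℕ) : Submodule ℂ U :=
  Submodule.span ℂ
    {x : U | ∃ a b g, g ∈ ({E ^ 2, F ^ 2, K ^ (2 * N) - 1} : Set U) ∧ x = a * g * b}

/-- The submodule `I ⊗ H + H ⊗ I` of `U ⊗ U`. -/
def J (N : ℕ) : Submodule ℂ (U ⊗[ℂ] U) :=
  Submodule.span ℂ
    ({z | ∃ a ∈ I N, ∃ b : U, z = a ⊗ₜ[ℂ] b} ∪ {z | ∃ a : U, ∃ b ∈ I N, z = a ⊗ₜ[ℂ] b})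

-- basic relations in U
lemma hKKi : K * Ki = 1 := by
  simpa [K, Ki, map_mul] using RingQuot.mkAlgHom_rel ℂ rel.kki

lemma hKiK : Ki * K = 1 := by
  simpa [K, Ki, map_mul] using RingQuot.mkAlgHom_rel ℂ rel.kik

lemma hKE : K * E = -(E * K) := by
  simpa [K, E, map_mul] using RingQuot.mkAlgHom_rel ℂ rel.ke

lemma hKF : K * F = -(F * K) := by
  simpa [K, F, map_mul] using RingQuot.mkAlgHom_rel ℂ rel.kf

lemma U_mul_neg (a b : U) : a * -b = -(a * b) := mul_neg a b
lemma U_neg_mul (a b : U) : -a * b = -(a * b) := neg_mul a b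

lemma flip (x : U) (h : K * x = -(x * K)) : x * Ki = -(Ki * x) := by
  calc x * Ki = Ki * K * (x * Ki) := by rw [hKiK, one_mul]
    _ = Ki * (K * x) * Ki := by
        rw [mul_assoc Ki K, ← mul_assoc K x, ← mul_assoc]
    _ = Ki * -(x * K) * Ki := by rw [h]
    _ = -(Ki * x * (K * Ki)) := by
        rw [U_mul_neg, U_neg_mul, ← mul_assoc Ki x K, mul_assoc (Ki * x) K Ki]
    _ = -(Ki * x) := by rw [hKKi, mul_one]

lemma hEKi : E * Ki = -(Ki * E) := flip E hKE
lemma hFKi : F * Ki = -(Ki * F) := flip F hKF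

def u : Uˣ := ⟨K, Ki, hKKi, hKiK⟩

lemma hKin (n : ℕ) : Ki ^ n * K ^ n = 1 := by
  have h1 : ((u ^ n)⁻¹ * u ^ n : Uˣ) = 1 := inv_mul_cancel _
  have := congrArg Units.val h1
  simpa [← inv_pow, Units.val_mul, u] using this


lemma gen_memI {N : ℕ} {g : U} (hg : g ∈ ({E ^ 2, F ^ 2, K ^ (2 * N) - 1} : Set U)) :
    g ∈ I N :=
  Submodule.subset_span ⟨1, 1, g, hg, by rw [one_mul, mul_one]⟩

lemma I_conj {N : ℕ} : ∀ x ∈ I N, ∀ c d : U, c * x * d ∈ I N := by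
  intro x hx
  induction hx using Submodule.span_induction with
  | mem x h =>
    obtain ⟨a, b, g, hg, rfl⟩ := h
    intro c d
    refine Submodule.subset_span ⟨c * a, b * d, g, hg, ?_⟩
    simp only [mul_assoc]
  | zero => intro c d; simpa using (I N).zero_mem
  | add x y _ _ hx hy =>
    intro c d
    have := (I N).add_mem (hx c d) (hy c d)
    simpa [mul_add, add_mul] using this
  | smul r x _ hx =>
    intro c d
    have := (I N).smul_mem r (hx c d)
    simpa [mul_smul_comm, smul_mul_assoc] using this

lemma memJ_left {N : ℕ} {a : U} (ha : a ∈ I N) (b : U) : a ⊗ₜ[ℂ] b ∈ J N :=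
  Submodule.subset_span (Or.inl ⟨a, ha, b, rfl⟩)

lemma memJ_right {N : ℕ} (a : U) {b : U} (hb : b ∈ I N) : a ⊗ₜ[ℂ] b ∈ J N :=
  Submodule.subset_span (Or.inr ⟨a, b, hb, rfl⟩)

lemma J_mul_pure {N : ℕ} {a b : U} (h : a ∈ I N ∨ b ∈ I N) :
    ∀ z₁ z₂ : U ⊗[ℂ] U, z₁ * a ⊗ₜ[ℂ] b * z₂ ∈ J N := by
  intro z₁ z₂
  induction z₁ using TensorProduct.induction_on with
  | zero => simpa using (J N).zero_mem
  | tmul c d =>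
    induction z₂ using TensorProduct.induction_on with
    | zero => simpa using (J N).zero_mem
    | tmul e f =>
      rw [Algebra.TensorProduct.tmul_mul_tmul, Algebra.TensorProduct.tmul_mul_tmul]
      rcases h with h | h
      · exact memJ_left (I_conj a h c e) _
      · exact memJ_right _ (I_conj b h d f)
    | add z w hz hw =>
      have := (J N).add_mem hz hw
      simpa [mul_add] using this
  | add z w hz hw =>
    have := (J N).add_mem hz hw
    simpa [add_mul] using this

lemma J_conj {N : ℕ} : ∀ w ∈ J N, ∀ z₁ z₂ : U ⊗[ℂ] U, z₁ * w * z₂ ∈ J N := by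
  intro w hw
  induction hw using Submodule.span_induction with
  | mem w h =>
    rcases h with ⟨a, ha, b, rfl⟩ | ⟨a, b, hb, rfl⟩
    · exact J_mul_pure (Or.inl ha)
    · exact J_mul_pure (Or.inr hb)
  | zero => intro z₁ z₂; simpa using (J N).zero_mem
  | add x y _ _ hx hy =>
    intro z₁ z₂
    have := (J N).add_mem (hx z₁ z₂) (hy z₁ z₂)
    simpa [mul_add, add_mul] using this
  | smul r x _ hx =>
    intro z₁ z₂
    have := (J N).smul_mem r (hx z₁ z₂)
    simpa [mul_smul_comm, smul_mul_assoc] using this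

lemma U_neg_neg (a : U) : - -a = a := neg_neg a
lemma U_mul_sub (a b c : U) : a * (b - c) = a * b - a * c := mul_sub a b c
lemma U_neg_sub (a b : U) : -(a - b) = b - a := neg_sub a b
lemma U_neg_tmul (a b : U) : (-a) ⊗ₜ[ℂ] b = -(a ⊗ₜ[ℂ] b) := TensorProduct.neg_tmul a b
lemma U_tmul_neg (a b : U) : a ⊗ₜ[ℂ] (-b) = -(a ⊗ₜ[ℂ] b) := TensorProduct.tmul_neg a b
lemma U_sub_tmul (a b c : U) : (a - b) ⊗ₜ[ℂ] c = a ⊗ₜ[ℂ] c - b ⊗ₜ[ℂ] c :=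
  TensorProduct.sub_tmul a b c
lemma U_tmul_sub (a b c : U) : a ⊗ₜ[ℂ] (b - c) = a ⊗ₜ[ℂ] b - a ⊗ₜ[ℂ] c :=
  TensorProduct.tmul_sub a b c

lemma hEKi' (x : U) : E * (Ki * x) = -(Ki * (E * x)) := by
  rw [← mul_assoc, hEKi, U_neg_mul, mul_assoc]
lemma hFKi' (x : U) : F * (Ki * x) = -(Ki * (F * x)) := by
  rw [← mul_assoc, hFKi, U_neg_mul, mul_assoc]
lemma hKF' (x : U) : K * (F * x) = -(F * (K * x)) := by
  rw [← mul_assoc, hKF, U_neg_mul, mul_assoc]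

/-- The ideal `I_N` is a Hopf ideal: it is killed by the counit `ε`, stable under the
antipode `S`, and its coproduct lies in `I ⊗ H + H ⊗ I`.  Here `ε`, `S` and `Δ` are the
counit, antipode and coproduct of `U_i(sl₂)`, determined by their stated values on the
generators (`S` being linear and antimultiplicative). -/
theorem hopf_ideal (N : ℕ) (hN : 0 < N)
    (ε : U →ₐ[ℂ] ℂ) (hεK : ε K = 1) (hεKi : ε Ki = 1) (hεE : ε E = 0) (hεF : ε F = 0)
    (S : U →ₗ[ℂ] U) (hS1 : S 1 = 1) (hSmul : ∀ x y : U, S (x * y) = S y * S x)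
    (hSK : S K = Ki) (hSKi : S Ki = K) (hSE : S E = -(Ki * E)) (hSF : S F = -(F * K))
    (Δ : U →ₐ[ℂ] U ⊗[ℂ] U)
    (hΔK : Δ K = K ⊗ₜ[ℂ] K) (hΔKi : Δ Ki = Ki ⊗ₜ[ℂ] Ki)
    (hΔE : Δ E = E ⊗ₜ[ℂ] (1 : U) + K ⊗ₜ[ℂ] E)
    (hΔF : Δ F = F ⊗ₜ[ℂ] Ki + (1 : U) ⊗ₜ[ℂ] F) :
    ∀ x ∈ I N, ε x = 0 ∧ S x ∈ I N ∧ Δ x ∈ J N := by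
  -- counit on generators
  have hεE2 : ε (E ^ 2) = 0 := by rw [map_pow, hεE]; simp
  have hεF2 : ε (F ^ 2) = 0 := by rw [map_pow, hεF]; simp
  have hεKN : ε (K ^ (2 * N) - 1) = 0 := by
    rw [map_sub, map_pow, hεK, one_pow, map_one, sub_self]
  -- antipode on generators
  have hSKpow : ∀ n : ℕ, S (K ^ n) = Ki ^ n := by
    intro n
    induction n with
    | zero => simpa using hS1
    | succ n ih => rw [pow_succ, hSmul, hSK, ih]; exact (pow_succ' Ki n).symm
  have hSE2 : S (E ^ 2) ∈ I N := by
    have h : S (E ^ 2) = -(Ki * Ki) * E ^ 2 * 1 := by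
      rw [pow_two, hSmul, hSE]
      simp only [U_neg_mul, U_mul_neg, U_neg_neg, mul_one, one_mul, pow_two, mul_assoc, hEKi']
    rw [h]
    exact Submodule.subset_span ⟨-(Ki * Ki), 1, E ^ 2, by simp, rfl⟩
  have hSF2 : S (F ^ 2) ∈ I N := by
    have h : S (F ^ 2) = -1 * F ^ 2 * (K * K) := by
      rw [pow_two, hSmul, hSF]
      simp only [U_neg_mul, U_mul_neg, U_neg_neg, mul_one, one_mul, pow_two, mul_assoc, hKF']
    rw [h]
    exact Submodule.subset_span ⟨-1, K * K, F ^ 2, by simp, rfl⟩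
  have hSKN : S (K ^ (2 * N) - 1) ∈ I N := by
    have h : S (K ^ (2 * N) - 1) = -(Ki ^ (2 * N)) * (K ^ (2 * N) - 1) * 1 := by
      rw [map_sub, hSKpow, hS1, mul_one, U_neg_mul, U_mul_sub, hKin, mul_one, U_neg_sub]
    rw [h]
    exact Submodule.subset_span ⟨-(Ki ^ (2 * N)), 1, K ^ (2 * N) - 1, by simp, rfl⟩
  -- coproduct on generators
  have hΔE2 : Δ (E ^ 2) ∈ J N := by
    have h : Δ (E ^ 2) = (E ^ 2) ⊗ₜ[ℂ] (1 : U) + (K ^ 2) ⊗ₜ[ℂ] (E ^ 2) := by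
      rw [map_pow, hΔE, pow_two, add_mul, mul_add, mul_add]
      simp only [pow_two, Algebra.TensorProduct.tmul_mul_tmul, one_mul, mul_one, hKE,
        U_neg_tmul]
      abel
    rw [h]
    exact add_mem (memJ_left (gen_memI (by simp)) _) (memJ_right _ (gen_memI (by simp)))
  have hΔF2 : Δ (F ^ 2) ∈ J N := by
    have h : Δ (F ^ 2) = (F ^ 2) ⊗ₜ[ℂ] (Ki ^ 2) + (1 : U) ⊗ₜ[ℂ] (F ^ 2) := by
      rw [map_pow, hΔF, pow_two, add_mul, mul_add, mul_add]
      simp only [pow_two, Algebra.TensorProduct.tmul_mul_tmul, one_mul, mul_one, hFKi,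
        U_tmul_neg]
      abel
    rw [h]
    exact add_mem (memJ_left (gen_memI (by simp)) _) (memJ_right _ (gen_memI (by simp)))
  have hΔKN : Δ (K ^ (2 * N) - 1) ∈ J N := by
    have h : Δ (K ^ (2 * N) - 1)
        = (K ^ (2 * N) - 1) ⊗ₜ[ℂ] (K ^ (2 * N)) + (1 : U) ⊗ₜ[ℂ] (K ^ (2 * N) - 1) := by
      rw [map_sub, map_pow, hΔK, map_one, Algebra.TensorProduct.tmul_pow,
        Algebra.TensorProduct.one_def, U_sub_tmul, U_tmul_sub]
      abel
    rw [h]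
    exact add_mem (memJ_left (gen_memI (by simp)) _) (memJ_right _ (gen_memI (by simp)))
  -- assemble
  intro x hx
  induction hx using Submodule.span_induction with
  | mem x h =>
    obtain ⟨a, b, g, hg, rfl⟩ := h
    simp only [Set.mem_insert_iff, Set.mem_singleton_iff] at hg
    obtain rfl | rfl | rfl := hg
    all_goals refine ⟨?_, ?_, ?_⟩
    · rw [map_mul, map_mul, hεE2, mul_zero, zero_mul]
    · rw [hSmul, hSmul]
      simpa [mul_assoc] using I_conj _ hSE2 (S b) (S a)
    · rw [map_mul, map_mul]; exact J_conj _ hΔE2 (Δ a) (Δ b)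
    · rw [map_mul, map_mul, hεF2, mul_zero, zero_mul]
    · rw [hSmul, hSmul]
      simpa [mul_assoc] using I_conj _ hSF2 (S b) (S a)
    · rw [map_mul, map_mul]; exact J_conj _ hΔF2 (Δ a) (Δ b)
    · rw [map_mul, map_mul, hεKN, mul_zero, zero_mul]
    · rw [hSmul, hSmul]
      simpa [mul_assoc] using I_conj _ hSKN (S b) (S a)
    · rw [map_mul, map_mul]; exact J_conj _ hΔKN (Δ a) (Δ b)
  | zero =>
    exact ⟨map_zero ε, by rw [map_zero]; exact zero_mem _, by rw [map_zero]; exact zero_mem _⟩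
  | add x y _ _ hx hy =>
    exact ⟨by rw [map_add, hx.1, hy.1, add_zero],
      by rw [map_add]; exact add_mem hx.2.1 hy.2.1,
      by rw [map_add]; exact add_mem hx.2.2 hy.2.2⟩
  | smul r x _ hx =>
    exact ⟨by rw [map_smul, hx.1, smul_zero],
      by rw [map_smul]; exact Submodule.smul_mem _ r hx.2.1,
      by rw [map_smul]; exact Submodule.smul_mem _ r hx.2.2⟩


end Stmt2
end
end

section
/- The algebra H_1^i defined by generators K, E, F with relations KE = -EK, KF = -FK, EF = FE, E² = 0, F² = 0, K² = 1 has dimension 8 over ℂ, with basis {e_0, e_1, e_0E, e_1E, e_0F, e_1F, e_0EF, e_1EF} where e_0 = (1+K)/2 and e_1 = (1-K)/2. -/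
/-!
The span `N` of the eight vectors contains `1 = e₀ + e₁` and is stable under left multiplication
by the generators: `K e₀ = e₀`, `K e₁ = -e₁`, while `E` and `F` swap the two idempotents
(`E e₀ = e₁ E`, ...) and otherwise act through `E² = F² = 0` and `FE = EF`. As `K, E, F` generate
`H_1^i`, `N` is everything.

For independence, take square-zero elements `x, y` of a commutative `ℂ`-algebra with `1, x, y, xy`
linearly independent, e.g. `ε` and `inl ε` in `ℂ[ε][ε]`. Then `K ↦ diag(1, -1)`,
`E ↦ x (0 1; 1 0)`, `F ↦ y (0 1; 1 0)` respects the relations and sends the eight vectors to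
`E₁₁, E₂₂, x E₁₂, x E₂₁, y E₁₂, y E₂₁, xy E₁₁, xy E₂₂`, which are visibly independent.
-/

noncomputable section


namespace Stmt5

def X (n : Fin 3) : FreeAlgebra ℂ (Fin 3) := FreeAlgebra.ι ℂ n

/-- Relations of `H_1^i`: `KE = -EK`, `KF = -FK`, `EF = FE`, `E² = 0`, `F² = 0`, `K² = 1`. -/
inductive rel : FreeAlgebra ℂ (Fin 3) → FreeAlgebra ℂ (Fin 3) → Prop
  | ke : rel (X 0 * X 1) (-(X 1 * X 0))
  | kf : rel (X 0 * X 2) (-(X 2 * X 0))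
  | ef : rel (X 1 * X 2) (X 2 * X 1)
  | e2 : rel (X 1 ^ 2) 0
  | f2 : rel (X 2 ^ 2) 0
  | k2 : rel (X 0 ^ 2) 1

/-- The algebra `H_1^i`. -/
abbrev H1 := RingQuot rel

def K : H1 := RingQuot.mkAlgHom ℂ rel (X 0)
def E : H1 := RingQuot.mkAlgHom ℂ rel (X 1)
def F : H1 := RingQuot.mkAlgHom ℂ rel (X 2)
def e0 : H1 := (2 : ℂ)⁻¹ • (1 + K)
def e1 : H1 := (2 : ℂ)⁻¹ • (1 - K)

theorem span_range_eq_top_of_mul_mem {R A ι : Type*} [CommSemiring R] [Semiring A]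
    [Algebra R A] {s : Set A} (hs : Algebra.adjoin R s = ⊤) {v : ι → A}
    (h1 : 1 ∈ Submodule.span R (Set.range v))
    (hmul : ∀ a ∈ s, ∀ i, a * v i ∈ Submodule.span R (Set.range v)) :
    Submodule.span R (Set.range v) = ⊤ := by
  set N := Submodule.span R (Set.range v)
  have hN : ∀ a ∈ s, ∀ n ∈ N, a * n ∈ N := fun a ha =>
    Submodule.span_le (p := N.comap (LinearMap.mulLeft R a)).mpr
      (Set.range_subset_iff.mpr (hmul a ha))
  rw [eq_top_iff]
  rintro x -
  have hx : x ∈ Algebra.adjoin R s := hs ▸ Algebra.mem_top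
  suffices ∀ n ∈ N, x * n ∈ N from mul_one x ▸ this 1 h1
  induction hx using Algebra.adjoin_induction with
  | mem a ha => exact hN a ha
  | algebraMap r => exact fun n hn => Algebra.smul_def r n ▸ N.smul_mem r hn
  | add a b _ _ ha hb => exact fun n hn => (add_mul a b n).symm ▸ N.add_mem (ha n hn) (hb n hn)
  | mul a b _ _ ha hb => exact fun n hn => (mul_assoc a b n).symm ▸ ha _ (hb n hn)

theorem adjoin_K_E_F : Algebra.adjoin ℂ {K, E, F} = ⊤ := by
  have hgen : RingQuot.mkAlgHom ℂ rel '' Set.range (FreeAlgebra.ι ℂ) = {K, E, F} := by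
    rw [← Set.range_comp]
    ext x
    simp [Fin.exists_fin_succ, K, E, F, X, eq_comm]
  rw [← hgen, Algebra.adjoin_image, FreeAlgebra.adjoin_range_ι, Algebra.map_top,
    AlgHom.range_eq_top]
  exact RingQuot.mkAlgHom_surjective ℂ rel

theorem K_mul_E : K * E = -(E * K) := by
  simpa [K, E] using RingQuot.mkAlgHom_rel ℂ rel.ke
theorem K_mul_F : K * F = -(F * K) := by
  simpa [K, F] using RingQuot.mkAlgHom_rel ℂ rel.kf
theorem F_mul_E : F * E = E * F := by
  simpa [E, F] using (RingQuot.mkAlgHom_rel ℂ rel.ef).symm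
theorem E_mul_E : E * E = 0 := by
  simpa [E, sq] using RingQuot.mkAlgHom_rel ℂ rel.e2
theorem F_mul_F : F * F = 0 := by
  simpa [F, sq] using RingQuot.mkAlgHom_rel ℂ rel.f2
theorem K_mul_K : K * K = 1 := by
  simpa [K, sq] using RingQuot.mkAlgHom_rel ℂ rel.k2

theorem e0_add_e1 : e0 + e1 = 1 := by
  rw [e0, e1, ← smul_add, add_add_sub_cancel, ← two_smul ℂ, smul_smul,
    inv_mul_cancel₀ two_ne_zero, one_smul]

theorem K_mul_e0 : K * e0 = e0 := by
  rw [e0, mul_smul_comm, mul_add, mul_one, K_mul_K, add_comm]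
-- Phrased with a scalar because `neg_mul` does not fire in `H1`: its `Neg` and `Mul` come from
-- two `Ring` structures on `FreeAlgebra` that agree only up to unfolding.
theorem K_mul_e1 : K * e1 = (-1 : ℂ) • e1 := by
  rw [e1, mul_smul_comm, mul_sub, mul_one, K_mul_K]
  module
theorem E_mul_e0 : E * e0 = e1 * E := by
  simp only [e0, e1, mul_smul_comm, smul_mul_assoc, mul_add, sub_mul, K_mul_E]; noncomm_ring
theorem E_mul_e1 : E * e1 = e0 * E := by
  simp only [e0, e1, mul_smul_comm, smul_mul_assoc, mul_sub, add_mul, K_mul_E]; noncomm_ring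
theorem F_mul_e0 : F * e0 = e1 * F := by
  simp only [e0, e1, mul_smul_comm, smul_mul_assoc, mul_add, sub_mul, K_mul_F]; noncomm_ring
theorem F_mul_e1 : F * e1 = e0 * F := by
  simp only [e0, e1, mul_smul_comm, smul_mul_assoc, mul_sub, add_mul, K_mul_F]; noncomm_ring

def basisVectors : Fin 8 → H1 :=
  ![e0, e1, e0 * E, e1 * E, e0 * F, e1 * F, e0 * (E * F), e1 * (E * F)]

theorem K_mul_basisVectors (i : Fin 8) :
    K * basisVectors i = (-1 : ℂ) ^ (i : ℕ) • basisVectors i := by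
  fin_cases i <;>
    norm_num [basisVectors, ← mul_assoc, K_mul_e0, K_mul_e1, smul_mul_assoc]

theorem E_mul_basisVectors (i : Fin 8) :
    E * basisVectors i =
      ![basisVectors 3, basisVectors 2, 0, 0, basisVectors 7, basisVectors 6, 0, 0] i := by
  fin_cases i <;>
    simp only [basisVectors, Fin.zero_eta, Fin.mk_one, Fin.reduceFinMk, Matrix.cons_val,
      ← mul_assoc, E_mul_e0, E_mul_e1] <;>
    simp only [mul_assoc, E_mul_E, mul_zero, zero_mul]

theorem F_mul_basisVectors (i : Fin 8) :
    F * basisVectors i =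
      ![basisVectors 5, basisVectors 4, basisVectors 7, basisVectors 6, 0, 0, 0, 0] i := by
  fin_cases i <;>
    simp only [basisVectors, Fin.zero_eta, Fin.mk_one, Fin.reduceFinMk, Matrix.cons_val,
      ← mul_assoc, F_mul_e0, F_mul_e1] <;>
    simp only [mul_assoc, F_mul_E, F_mul_F, mul_zero]

theorem span_basisVectors : Submodule.span ℂ (Set.range basisVectors) = ⊤ := by
  have mem (i : Fin 8) : basisVectors i ∈ Submodule.span ℂ (Set.range basisVectors) :=
    Submodule.subset_span ⟨i, rfl⟩
  refine span_range_eq_top_of_mul_mem adjoin_K_E_F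
    (e0_add_e1 ▸ add_mem (mem 0) (mem 1)) ?_
  simp only [Set.mem_insert_iff, Set.mem_singleton_iff]
  rintro g (rfl | rfl | rfl) i
  · exact K_mul_basisVectors i ▸ Submodule.smul_mem _ _ (mem i)
  all_goals
    simp only [E_mul_basisVectors, F_mul_basisVectors]
    fin_cases i <;> simp only [Fin.zero_eta, Fin.mk_one, Fin.reduceFinMk, Matrix.cons_val] <;>
      first | exact zero_mem _ | exact mem _

section Representation

variable {R : Type*} [CommRing R] [Algebra ℂ R] {x y : R}

def matrixRep (hx : x * x = 0) (hy : y * y = 0) : H1 →ₐ[ℂ] Matrix (Fin 2) (Fin 2) R :=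
  RingQuot.liftAlgHom ℂ ⟨FreeAlgebra.lift ℂ ![!![1, 0; 0, -1], !![0, x; x, 0], !![0, y; y, 0]],
    fun a b h => by
      induction h <;> ext i j <;> fin_cases i <;> fin_cases j <;>
        simp [X, sq, Matrix.mul_apply, hx, hy, mul_comm x y]⟩

variable (hx : x * x = 0) (hy : y * y = 0)

theorem matrixRep_K : matrixRep hx hy K = !![1, 0; 0, -1] := by simp [matrixRep, K, X]
theorem matrixRep_E : matrixRep hx hy E = !![0, x; x, 0] := by simp [matrixRep, E, X]
theorem matrixRep_F : matrixRep hx hy F = !![0, y; y, 0] := by simp [matrixRep, F, X]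

theorem matrixRep_e0 : matrixRep hx hy e0 = !![1, 0; 0, 0] := by
  ext i j; fin_cases i <;> fin_cases j <;> norm_num [e0, matrixRep_K, ← add_smul]
theorem matrixRep_e1 : matrixRep hx hy e1 = !![0, 0; 0, 1] := by
  ext i j; fin_cases i <;> fin_cases j <;> norm_num [e1, matrixRep_K, smul_sub, ← add_smul]

theorem linearIndependent_basisVectors_of_linearIndependent (hx : x * x = 0) (hy : y * y = 0)
    (h : LinearIndependent ℂ ![1, x, y, x * y]) : LinearIndependent ℂ basisVectors := by
  have coeff : ∀ a b c d : ℂ, a • 1 + b • x + c • y + d • (x * y) = 0 →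
      a = 0 ∧ b = 0 ∧ c = 0 ∧ d = 0 := by
    intro a b c d habcd
    have := Fintype.linearIndependent_iff.mp h ![a, b, c, d]
      (by simpa [Fin.sum_univ_four] using habcd)
    exact ⟨this 0, this 1, this 2, this 3⟩
  refine LinearIndependent.of_comp (matrixRep hx hy).toLinearMap
    (Fintype.linearIndependent_iff.mpr fun c hc => ?_)
  have hc' : !![c 0 • 1 + c 6 • (x * y), c 2 • x + c 4 • y;
      c 3 • x + c 5 • y, c 1 • 1 + c 7 • (x * y)] = 0 := by
    rw [← hc]
    ext i j
    fin_cases i <;> fin_cases j <;>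
      simp [Fin.sum_univ_eight, basisVectors, matrixRep_e0, matrixRep_e1, matrixRep_E,
        matrixRep_F]
  obtain ⟨h0, -, -, h6⟩ := coeff (c 0) 0 0 (c 6) (by simpa using congr_fun₂ hc' 0 0)
  obtain ⟨h1, -, -, h7⟩ := coeff (c 1) 0 0 (c 7) (by simpa using congr_fun₂ hc' 1 1)
  obtain ⟨-, h2, h4, -⟩ := coeff 0 (c 2) (c 4) 0 (by simpa using congr_fun₂ hc' 0 1)
  obtain ⟨-, h3, h5, -⟩ := coeff 0 (c 3) (c 5) 0 (by simpa using congr_fun₂ hc' 1 0)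
  intro i
  fin_cases i <;> assumption

end Representation

open DualNumber in
theorem linearIndependent_dualNumber :
    LinearIndependent ℂ ![(1 : ℂ[ε][ε]), ε, TrivSqZeroExt.inl ε, ε * TrivSqZeroExt.inl ε] := by
  refine Fintype.linearIndependent_iff.mpr fun c hc => ?_
  obtain ⟨⟨h0, h2⟩, h1, h3⟩ : (c 0 = 0 ∧ c 2 = 0) ∧ c 1 = 0 ∧ c 3 = 0 := by
    simpa [Fin.sum_univ_four, TrivSqZeroExt.ext_iff] using hc
  intro i
  fin_cases i <;> assumption

open DualNumber in
theorem linearIndependent_basisVectors : LinearIndependent ℂ basisVectors := by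
  have hy : (TrivSqZeroExt.inl ε : ℂ[ε][ε]) * TrivSqZeroExt.inl ε = 0 := by
    rw [← TrivSqZeroExt.inl_mul, eps_mul_eps, TrivSqZeroExt.inl_zero]
  have h := linearIndependent_basisVectors_of_linearIndependent (R := ℂ[ε][ε]) (x := ε)
    (y := .inl ε) eps_mul_eps hy
  exact h linearIndependent_dualNumber

/-- `H_1^i` is 8-dimensional over `ℂ`, with basis
`{e₀, e₁, e₀E, e₁E, e₀F, e₁F, e₀EF, e₁EF}`. -/
theorem dim_eight :
    (∃ b : Module.Basis (Fin 8) ℂ H1,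
      ⇑b = ![e0, e1, e0 * E, e1 * E, e0 * F, e1 * F, e0 * (E * F), e1 * (E * F)]) ∧
    Module.finrank ℂ H1 = 8 := by
  let b := Module.Basis.mk linearIndependent_basisVectors span_basisVectors.ge
  exact ⟨⟨b, Module.Basis.coe_mk _ _⟩, by rw [Module.finrank_eq_card_basis b, Fintype.card_fin]⟩

end Stmt5
end
end
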